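/- (Craig's formula) For every real x ≥ 0, the Gaussian Q-function satisfies Q(x) = (1/π) ∫_0^{π/2} exp( −x² / (2 sin² ϑ) ) dϑ. -/

import Mathlib

/-!
Write `R(x)` for the right-hand side. It tends to `0` as `x → ∞` (dominated convergence), and for
`x > 0` differentiating under the integral sign and substituting `u = cot ϑ` turns `R'(x)` into a
Gaussian integral over `(0, ∞)`, equal to `-e^{-x²/2} / √(2π)`. Hence `Q(x) = ∫_x^∞ -R' = R(x)` by
the fundamental theorem of calculus on `[x, ∞)`; continuity of `R` at `0` covers `x = 0`.
-/

open MeasureTheory Real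

/-- The Gaussian tail function Q(x) = ∫_x^∞ (1/√(2π)) e^{-t²/2} dt. -/
noncomputable def gaussQ (x : ℝ) : ℝ :=
  ∫ t in Set.Ioi x, (1 / Real.sqrt (2*π)) * Real.exp (-t^2/2)

open Set Filter Topology

lemma hasDerivAt_exp_neg_sq_div (c x : ℝ) :
    HasDerivAt (fun x ↦ exp (-x ^ 2 / (2 * c))) (-(x / c * exp (-x ^ 2 / (2 * c)))) x := by
  have hpoly : HasDerivAt (fun x ↦ -x ^ 2 / (2 * c)) (-(x / c)) x :=
    ((hasDerivAt_pow 2 x).fun_neg.div_const (2 * c)).congr_deriv (by norm_num; ring)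
  exact ((hasDerivAt_exp _).comp x hpoly).congr_deriv (by ring)

lemma norm_exp_neg_sq_div_le_one (x : ℝ) {c : ℝ} (hc : 0 ≤ c) :
    ‖exp (-x ^ 2 / (2 * c))‖ ≤ 1 := by
  rw [norm_of_nonneg (exp_pos _).le, exp_le_one_iff]
  exact div_nonpos_of_nonpos_of_nonneg (neg_nonpos.2 (sq_nonneg x)) (by positivity)

lemma norm_div_mul_exp_neg_sq_div_le {c x : ℝ} (hc : 0 ≤ c) (hx : 0 < x) :
    ‖x / c * exp (-x ^ 2 / (2 * c))‖ ≤ 2 / x := by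
  have hy : x / c * exp (-x ^ 2 / (2 * c))
      = 2 / x * (x ^ 2 / (2 * c) * exp (-(x ^ 2 / (2 * c)))) := by
    rw [neg_div]
    field_simp
  rw [hy, norm_of_nonneg (by positivity)]
  calc 2 / x * (x ^ 2 / (2 * c) * exp (-(x ^ 2 / (2 * c)))) ≤ 2 / x * 1 := by
        gcongr
        exact (mul_exp_neg_le_exp_neg_one _).trans (exp_le_one_iff.2 (by norm_num))
    _ = 2 / x := mul_one _

lemma image_arctan_Ioi_zero : arctan '' Ioi 0 = Ioo 0 (π / 2) := by
  ext θ
  constructor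
  · rintro ⟨u, hu, rfl⟩
    exact ⟨arctan_zero ▸ arctan_strictMono hu, arctan_lt_pi_div_two u⟩
  · rintro ⟨h0, hπ⟩
    exact ⟨tan θ, tan_pos_of_pos_of_lt_pi_div_two h0 hπ, arctan_tan (by linarith [pi_pos]) hπ⟩

/-- For `a ≤ 0` both sides are junk zeros: the integrand is not integrable at `0`, and
`√(π / a) = 0`. -/
lemma integral_exp_neg_div_sin_sq_div_sin_sq (a : ℝ) :
    ∫ θ in (0:ℝ)..(π / 2), exp (-a / sin θ ^ 2) / sin θ ^ 2 = exp (-a) * (√(π / a) / 2) := by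
  have hcos : ∫ θ in (0:ℝ)..(π / 2), exp (-a / sin θ ^ 2) / sin θ ^ 2
      = ∫ θ in Ioo 0 (π / 2), exp (-a / cos θ ^ 2) / cos θ ^ 2 := by
    have hreflect := intervalIntegral.integral_comp_sub_left
      (fun θ ↦ exp (-a / sin θ ^ 2) / sin θ ^ 2) (π / 2) (a := 0) (b := π / 2)
    rw [sub_self, sub_zero] at hreflect
    rw [← hreflect, intervalIntegral.integral_of_le (by positivity), integral_Ioc_eq_integral_Ioo]
    simp only [sin_pi_div_two_sub]
  have harctan : ∫ θ in Ioo 0 (π / 2), exp (-a / cos θ ^ 2) / cos θ ^ 2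
      = ∫ u in Ioi 0, exp (-a) * exp (-a * u ^ 2) := by
    rw [← image_arctan_Ioi_zero, integral_image_eq_integral_abs_deriv_smul measurableSet_Ioi
      (fun u _ ↦ (hasDerivAt_arctan u).hasDerivWithinAt) arctan_strictMono.injective.injOn]
    refine setIntegral_congr_fun measurableSet_Ioi fun u _ ↦ ?_
    rw [cos_sq_arctan, smul_eq_mul, abs_of_pos (by positivity), ← exp_add]
    field_simp
    ring_nf
  rw [hcos, harctan, integral_const_mul, integral_gaussian_Ioi]

lemma measurable_exp_neg_sq_div_sin_sq (x : ℝ) :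
    Measurable fun θ ↦ exp (-x ^ 2 / (2 * sin θ ^ 2)) := by
  fun_prop

lemma intervalIntegrable_exp_neg_sq_div_sin_sq (x a b : ℝ) :
    IntervalIntegrable (fun θ ↦ exp (-x ^ 2 / (2 * sin θ ^ 2))) volume a b :=
  (intervalIntegrable_const (μ := volume) (c := (1 : ℝ))).mono_fun'
    (measurable_exp_neg_sq_div_sin_sq x).aestronglyMeasurable
    (.of_forall fun _ ↦ norm_exp_neg_sq_div_le_one x (by positivity))

noncomputable def craigIntegral (x : ℝ) : ℝ :=
  ∫ θ in (0:ℝ)..(π / 2), exp (-x ^ 2 / (2 * sin θ ^ 2))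

lemma continuous_craigIntegral : Continuous craigIntegral :=
  intervalIntegral.continuous_of_dominated_interval (bound := fun _ ↦ 1)
    (fun x ↦ (measurable_exp_neg_sq_div_sin_sq x).aestronglyMeasurable)
    (fun x ↦ .of_forall fun _ _ ↦ norm_exp_neg_sq_div_le_one x (by positivity))
    intervalIntegrable_const (.of_forall fun _ _ ↦ by fun_prop)

lemma tendsto_craigIntegral_atTop : Tendsto craigIntegral atTop (𝓝 0) := by
  have hlim : Tendsto craigIntegral atTop (𝓝 (∫ _ in (0:ℝ)..(π / 2), (0:ℝ))) :=
    intervalIntegral.tendsto_integral_filter_of_dominated_convergence (μ := volume)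
      (F := fun x θ ↦ exp (-x ^ 2 / (2 * sin θ ^ 2))) (fun _ ↦ 1)
      (.of_forall fun x ↦ (measurable_exp_neg_sq_div_sin_sq x).aestronglyMeasurable)
      (.of_forall fun x ↦ .of_forall fun _ _ ↦ norm_exp_neg_sq_div_le_one x (by positivity))
      intervalIntegrable_const (.of_forall fun θ hθ ↦ ?_)
  · simpa using hlim
  rw [uIoc_of_le (by positivity)] at hθ
  have hsin : 0 < 2 * sin θ ^ 2 := by
    have := sin_pos_of_pos_of_lt_pi hθ.1 (hθ.2.trans_lt (by linarith [pi_pos]))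
    positivity
  exact tendsto_exp_atBot.comp
    ((tendsto_neg_atTop_atBot.comp (tendsto_pow_atTop two_ne_zero)).atBot_div_const hsin)

lemma integral_div_sin_sq_mul_exp_neg_sq_div_sin_sq {x : ℝ} (hx : 0 < x) :
    ∫ θ in (0:ℝ)..(π / 2), x / sin θ ^ 2 * exp (-x ^ 2 / (2 * sin θ ^ 2))
      = √(π / 2) * exp (-x ^ 2 / 2) := by
  have hsqrt : √(π / (x ^ 2 / 2)) = √(π / 2) * (2 / x) := by
    rw [show π / (x ^ 2 / 2) = π / 2 * (2 / x) ^ 2 by field_simp,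
      sqrt_mul' _ (sq_nonneg _), sqrt_sq (by positivity)]
  calc _ = x * ∫ θ in (0:ℝ)..(π / 2), exp (-(x ^ 2 / 2) / sin θ ^ 2) / sin θ ^ 2 := by
        rw [← intervalIntegral.integral_const_mul]
        congr 1 with θ
        ring_nf
    _ = x * (exp (-(x ^ 2 / 2)) * (√(π / (x ^ 2 / 2)) / 2)) := by
        rw [integral_exp_neg_div_sin_sq_div_sin_sq]
    _ = √(π / 2) * exp (-x ^ 2 / 2) := by
        rw [hsqrt]
        field_simp

lemma hasDerivAt_craigIntegral {x₀ : ℝ} (hx₀ : 0 < x₀) :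
    HasDerivAt craigIntegral (-(√(π / 2) * exp (-x₀ ^ 2 / 2))) x₀ := by
  have hderiv := intervalIntegral.hasDerivAt_integral_of_dominated_loc_of_deriv_le
    (F := fun x θ ↦ exp (-x ^ 2 / (2 * sin θ ^ 2)))
    (F' := fun x θ ↦ -(x / sin θ ^ 2 * exp (-x ^ 2 / (2 * sin θ ^ 2))))
    (bound := fun _ ↦ 4 / x₀) (a := 0) (b := π / 2) (Ioi_mem_nhds (half_lt_self hx₀))
    (.of_forall fun x ↦ (measurable_exp_neg_sq_div_sin_sq x).aestronglyMeasurable)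
    (intervalIntegrable_exp_neg_sq_div_sin_sq x₀ _ _) (by fun_prop)
    (.of_forall fun θ _ x (hx : x₀ / 2 < x) ↦ ?_) intervalIntegrable_const
    (.of_forall fun θ _ x _ ↦ hasDerivAt_exp_neg_sq_div _ x)
  · have := hderiv.2
    rwa [intervalIntegral.integral_neg, integral_div_sin_sq_mul_exp_neg_sq_div_sin_sq hx₀] at this
  · calc _ ≤ 2 / x := by
          rw [norm_neg]
          exact norm_div_mul_exp_neg_sq_div_le (by positivity) (by linarith)
      _ ≤ 4 / x₀ := by rw [div_le_div_iff₀ (by linarith) hx₀]; linarith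

/-- Craig's formula: Q(x) = (1/π) ∫_0^{π/2} exp(-x²/(2 sin²ϑ)) dϑ for x ≥ 0. -/
theorem craig_formula (x : ℝ) (hx : 0 ≤ x) :
    gaussQ x = (1/π) * ∫ ϑ in (0:ℝ)..(π/2), Real.exp (-x^2 / (2 * Real.sin ϑ ^ 2)) := by
  have hconst : √(π / 2) / π = 1 / √(2 * π) := by
    rw [div_eq_div_iff pi_ne_zero (by positivity), one_mul, ← sqrt_mul (by positivity),
      show π / 2 * (2 * π) = π ^ 2 by ring, sqrt_sq pi_pos.le]
  have hderiv : ∀ y ∈ Ioi x, HasDerivAt (fun y ↦ -(1 / π) * craigIntegral y)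
      (1 / √(2 * π) * exp (-y ^ 2 / 2)) y := fun y hy ↦
    ((hasDerivAt_craigIntegral (hx.trans_lt hy)).const_mul _).congr_deriv
      (by rw [← hconst]; ring)
  have hint : IntegrableOn (fun t ↦ 1 / √(2 * π) * exp (-t ^ 2 / 2)) (Ioi x) :=
    ((integrable_exp_neg_mul_sq (by norm_num : (0:ℝ) < 1 / 2)).const_mul (1 / √(2 * π))
      |>.integrableOn.congr_fun (fun t _ ↦ by ring_nf) measurableSet_Ioi)
  have hlim : Tendsto (fun y ↦ -(1 / π) * craigIntegral y) atTop (𝓝 0) := by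
    simpa using tendsto_craigIntegral_atTop.const_mul (-(1 / π))
  rw [gaussQ, integral_Ioi_of_hasDerivAt_of_tendsto
    (continuous_craigIntegral.const_mul _).continuousWithinAt hderiv hint hlim]
  simp [craigIntegral]
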